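/- arXiv:2011.05094 — 3 statements merged into one kernel-verified Lean document; each statement's English description precedes it below -/
import Mathlib

section
/- Let a ≥ 2 be an integer. The additive submonoid S = {(m₁,m₂,k) ∈ ℤ³ : 0 ≤ m₂, m₂ ≤ k, 0 ≤ a·m₁ + m₂, and a·m₁ + m₂ ≤ k} of ℤ³ is equal to the additive submonoid of ℤ³ generated by the four vectors v₁ = (0,0,1), v₂ = (0,1,1), v₃ = (1,0,a), v₄ = (−1,a,a); that is, every element of S is a finite sum of copies of v₁, v₂, v₃, v₄, and conversely. -/
/-!
The cone `τ` is the union of two unimodular cones, cut along the plane `m₁ = 0`.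
For `m₁ ≥ 0` a lattice point of `τ` is the combination
`(k - a m₁ - m₂) (0,0,1) + m₂ (0,1,1) + m₁ (1,0,a)`, and for `m₁ ≤ 0` it is
`(k - m₂) (0,0,1) + (a m₁ + m₂) (0,1,1) + (-m₁) (-1,a,a)`; the defining inequalities of `τ`
say exactly that these coefficients are nonnegative.
-/

namespace ToricHypersurface

theorem zsmul_mem_of_nonneg {M : Type*} [AddGroup M] {S : AddSubmonoid M} {x : M} (hx : x ∈ S)
    {n : ℤ} (hn : 0 ≤ n) : n • x ∈ S := by
  lift n to ℕ using hn
  rw [natCast_zsmul]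
  exact nsmul_mem hx n

def generators (a : ℤ) : Set (ℤ × ℤ × ℤ) := {(0, 0, 1), (0, 1, 1), (1, 0, a), (-1, a, a)}

def coneLatticePoints (a : ℤ) : AddSubmonoid (ℤ × ℤ × ℤ) where
  carrier := {p | 0 ≤ p.2.1 ∧ p.2.1 ≤ p.2.2 ∧ 0 ≤ a * p.1 + p.2.1 ∧ a * p.1 + p.2.1 ≤ p.2.2}
  zero_mem' := by simp
  add_mem' := by
    rintro p q ⟨hp₁, hp₂, hp₃, hp₄⟩ ⟨hq₁, hq₂, hq₃, hq₄⟩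
    refine ⟨?_, ?_, ?_, ?_⟩ <;> simp only [Prod.fst_add, Prod.snd_add, mul_add] <;> linarith

theorem mem_coneLatticePoints {a : ℤ} {p : ℤ × ℤ × ℤ} :
    p ∈ coneLatticePoints a ↔
      0 ≤ p.2.1 ∧ p.2.1 ≤ p.2.2 ∧ 0 ≤ a * p.1 + p.2.1 ∧ a * p.1 + p.2.1 ≤ p.2.2 :=
  Iff.rfl

theorem closure_generators_le {a : ℤ} (ha : 0 ≤ a) :
    AddSubmonoid.closure (generators a) ≤ coneLatticePoints a := by
  rw [AddSubmonoid.closure_le]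
  rintro v (rfl | rfl | rfl | rfl) <;> simp [mem_coneLatticePoints, ha]

theorem le_closure_generators (a : ℤ) :
    coneLatticePoints a ≤ AddSubmonoid.closure (generators a) := by
  rintro ⟨m₁, m₂, k⟩ ⟨h₁, h₂, h₃, h₄⟩
  dsimp only at h₁ h₂ h₃ h₄
  have mem_of_mem_generators {v} (hv : v ∈ generators a) {n : ℤ} (hn : 0 ≤ n) :
      n • v ∈ AddSubmonoid.closure (generators a) :=
    zsmul_mem_of_nonneg (AddSubmonoid.subset_closure hv) hn
  rcases le_total 0 m₁ with hm | hm
  · have decomp : ((m₁, m₂, k) : ℤ × ℤ × ℤ) =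
        (k - a * m₁ - m₂) • (0, 0, 1) + m₂ • (0, 1, 1) + m₁ • (1, 0, a) := by
      ext <;> simp; ring
    rw [decomp]
    exact add_mem (add_mem (mem_of_mem_generators (by simp [generators]) (by linarith))
      (mem_of_mem_generators (by simp [generators]) h₁))
      (mem_of_mem_generators (by simp [generators]) hm)
  · have decomp : ((m₁, m₂, k) : ℤ × ℤ × ℤ) =
        (k - m₂) • (0, 0, 1) + (a * m₁ + m₂) • (0, 1, 1) + (-m₁) • (-1, a, a) := by
      ext <;> simp <;> ring
    rw [decomp]
    exact add_mem (add_mem (mem_of_mem_generators (by simp [generators]) (by linarith))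
      (mem_of_mem_generators (by simp [generators]) (by linarith)))
      (mem_of_mem_generators (by simp [generators]) (by linarith))

theorem closure_generators_eq {a : ℤ} (ha : 0 ≤ a) :
    AddSubmonoid.closure (generators a) = coneLatticePoints a :=
  le_antisymm (closure_generators_le ha) (le_closure_generators a)

end ToricHypersurface

open ToricHypersurface in
/-- For an integer `a ≥ 2`, the additive submonoid
`S = {(m₁,m₂,k) ∈ ℤ³ : 0 ≤ m₂, m₂ ≤ k, 0 ≤ a m₁ + m₂, a m₁ + m₂ ≤ k}` coincides with the
additive submonoid of `ℤ³` generated by `(0,0,1)`, `(0,1,1)`, `(1,0,a)`, `(-1,a,a)`. -/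
theorem stmt_1 (a : ℤ) (ha : 2 ≤ a) :
    (AddSubmonoid.closure ({(0, 0, 1), (0, 1, 1), (1, 0, a), (-1, a, a)} : Set (ℤ × ℤ × ℤ)) :
        Set (ℤ × ℤ × ℤ))
    = {p : ℤ × ℤ × ℤ |
        0 ≤ p.2.1 ∧ p.2.1 ≤ p.2.2 ∧ 0 ≤ a * p.1 + p.2.1 ∧ a * p.1 + p.2.1 ≤ p.2.2} :=
  congrArg SetLike.coe (closure_generators_eq (a := a) (by linarith))
end

section
/- Let a ≥ 2 be an integer and let S = {(m₁,m₂,k) ∈ ℤ³ : 0 ≤ m₂ ≤ k and 0 ≤ a·m₁ + m₂ ≤ k}. Then none of the four vectors v₁ = (0,0,1), v₂ = (0,1,1), v₃ = (1,0,a), v₄ = (−1,a,a) can be written as a sum s + s' with s, s' ∈ S and s ≠ 0 ≠ s'. Consequently {v₁, v₂, v₃, v₄} is the minimal generating set of the monoid S: any set of generators of S must contain all four vectors. -/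
/-!
The only element of `S` of height `k = 0` is `0`, so `v₁` and `v₂`, of height one, are
indecomposable. Summands of `v₃` both have `m₂ = 0`, hence `m₁ ≥ 0`; summands of `v₄` both have
`a m₁ + m₂ = 0`, hence `m₁ ≤ 0`. As `m₁ + m₁' = ±1`, one summand has `m₁ = 0`, and then vanishes.
A nonzero indecomposable element lies in every generating set, since any expression of it as a
sum of generators has a single nonzero term.
-/

def Indecomposable {M : Type*} [AddZeroClass M] (S : Set M) (v : M) : Prop :=
  ∀ s s', s ∈ S → s' ∈ S → s + s' = v → s = 0 ∨ s' = 0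

theorem AddSubmonoid.mem_of_indecomposable {M : Type*} [AddZeroClass M] {G : Set M} {v : M}
    (hv : v ∈ closure G) (hv0 : v ≠ 0) (hirr : Indecomposable (closure G : Set M) v) : v ∈ G := by
  induction hv using AddSubmonoid.closure_induction with
  | mem x hx => exact hx
  | zero => exact absurd rfl hv0
  | add x y hx hy ihx ihy =>
    rcases hirr x y hx hy rfl with rfl | rfl
    · rw [zero_add] at *; exact ihy hv0 hirr
    · rw [add_zero] at *; exact ihx hv0 hirr

/-- The lattice points `(m₁, m₂, k)` of the cone over `Q × {1}`. -/
def latticeCone (a : ℤ) : Set (ℤ × ℤ × ℤ) :=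
  {p | 0 ≤ p.2.1 ∧ p.2.1 ≤ p.2.2 ∧ 0 ≤ a * p.1 + p.2.1 ∧ a * p.1 + p.2.1 ≤ p.2.2}

namespace latticeCone

variable {a : ℤ}

theorem eq_zero_of_height_eq_zero (ha : 0 < a) {p : ℤ × ℤ × ℤ} (hp : p ∈ latticeCone a)
    (hk : p.2.2 = 0) : p = 0 := by
  obtain ⟨x, y, k⟩ := p
  obtain ⟨hy, hyk, hxy, hxyk⟩ := hp
  dsimp only at *
  have hx : x = 0 := (mul_eq_zero_iff_left ha.ne').mp (by omega)
  simp only [Prod.mk_eq_zero]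
  omega

theorem indecomposable_of_height_eq_one (ha : 0 < a) {v : ℤ × ℤ × ℤ} (hv : v.2.2 = 1) :
    Indecomposable (latticeCone a) v := by
  rintro s s' hs hs' rfl
  have hk : s.2.2 = 0 ∨ s'.2.2 = 0 := by
    obtain ⟨hy, hyk, -, -⟩ := hs
    obtain ⟨hy', hyk', -, -⟩ := hs'
    simp only [Prod.snd_add] at hv
    omega
  exact hk.imp (eq_zero_of_height_eq_zero ha hs) (eq_zero_of_height_eq_zero ha hs')

theorem indecomposable_one_zero_a (ha : 0 < a) : Indecomposable (latticeCone a) (1, 0, a) := by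
  rintro ⟨x, y, k⟩ ⟨x', y', k'⟩ ⟨h₁, h₂, h₃, h₄⟩ ⟨h₁', h₂', h₃', h₄'⟩ h
  simp only [Prod.mk_add_mk, Prod.mk.injEq] at h
  obtain ⟨hx, hy, hk⟩ := h
  dsimp only at *
  have hsum : a * x + a * x' = a := by rw [← mul_add, hx, mul_one]
  have hx0 : 0 ≤ x := nonneg_of_mul_nonneg_right (by omega) ha
  have hx0' : 0 ≤ x' := nonneg_of_mul_nonneg_right (by omega) ha
  simp only [Prod.mk_eq_zero]
  rcases (by omega : x = 0 ∨ x' = 0) with rfl | rfl <;> rw [mul_zero] at * <;> omega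

theorem indecomposable_neg_one_a_a (ha : 0 < a) :
    Indecomposable (latticeCone a) (-1, a, a) := by
  rintro ⟨x, y, k⟩ ⟨x', y', k'⟩ ⟨h₁, h₂, h₃, h₄⟩ ⟨h₁', h₂', h₃', h₄'⟩ h
  simp only [Prod.mk_add_mk, Prod.mk.injEq] at h
  obtain ⟨hx, hy, hk⟩ := h
  dsimp only at *
  have hsum : a * x + a * x' = -a := by rw [← mul_add, hx, mul_neg_one]
  have hx0 : x ≤ 0 := nonpos_of_mul_nonpos_right (by omega) ha
  have hx0' : x' ≤ 0 := nonpos_of_mul_nonpos_right (by omega) ha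
  simp only [Prod.mk_eq_zero]
  rcases (by omega : x = 0 ∨ x' = 0) with rfl | rfl <;> rw [mul_zero] at * <;> omega

end latticeCone

/-- For an integer `a ≥ 2`, none of the four vectors `v₁ = (0,0,1)`, `v₂ = (0,1,1)`,
`v₃ = (1,0,a)`, `v₄ = (-1,a,a)` decomposes as a sum of two nonzero elements of the monoid
`S = {(m₁,m₂,k) : 0 ≤ m₂ ≤ k, 0 ≤ a m₁ + m₂ ≤ k}`; consequently every subset of `ℤ³`
generating `S` as an additive monoid contains all four vectors. -/
theorem stmt_2 (a : ℤ) (ha : 2 ≤ a) :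
    (∀ v ∈ ({(0, 0, 1), (0, 1, 1), (1, 0, a), (-1, a, a)} : Set (ℤ × ℤ × ℤ)),
      ∀ s s' : ℤ × ℤ × ℤ,
        (0 ≤ s.2.1 ∧ s.2.1 ≤ s.2.2 ∧ 0 ≤ a * s.1 + s.2.1 ∧ a * s.1 + s.2.1 ≤ s.2.2) →
        (0 ≤ s'.2.1 ∧ s'.2.1 ≤ s'.2.2 ∧ 0 ≤ a * s'.1 + s'.2.1 ∧ a * s'.1 + s'.2.1 ≤ s'.2.2) →
        s + s' = v → s = 0 ∨ s' = 0) ∧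
    (∀ G : Set (ℤ × ℤ × ℤ),
      (AddSubmonoid.closure G : Set (ℤ × ℤ × ℤ))
        = {p : ℤ × ℤ × ℤ |
            0 ≤ p.2.1 ∧ p.2.1 ≤ p.2.2 ∧ 0 ≤ a * p.1 + p.2.1 ∧ a * p.1 + p.2.1 ≤ p.2.2} →
      ({(0, 0, 1), (0, 1, 1), (1, 0, a), (-1, a, a)} : Set (ℤ × ℤ × ℤ)) ⊆ G) := by
  have ha₀ : 0 < a := by omega
  have hirr : ∀ v ∈ ({(0, 0, 1), (0, 1, 1), (1, 0, a), (-1, a, a)} : Set (ℤ × ℤ × ℤ)),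
      Indecomposable (latticeCone a) v := by
    rintro v (rfl | rfl | rfl | rfl)
    · exact latticeCone.indecomposable_of_height_eq_one ha₀ rfl
    · exact latticeCone.indecomposable_of_height_eq_one ha₀ rfl
    · exact latticeCone.indecomposable_one_zero_a ha₀
    · exact latticeCone.indecomposable_neg_one_a_a ha₀
  refine ⟨hirr, fun G hG v hv => ?_⟩
  have hmem : v ∈ latticeCone a ∧ v ≠ 0 := by
    rcases hv with rfl | rfl | rfl | rfl <;>
      simp only [latticeCone, Set.mem_ofPred_eq, ne_eq, Prod.mk_eq_zero] <;> omega
  refine AddSubmonoid.mem_of_indecomposable ?_ hmem.2 (hG ▸ hirr v hv)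
  rw [← SetLike.mem_coe, hG]
  exact hmem.1
end

section
/- Let a ≥ 2 be an integer. Consider the ℂ-algebra homomorphism φ from the polynomial ring ℂ[x,y,z,w] to the group algebra ℂ[ℤ³] (the algebra AddMonoidAlgebra ℂ (ℤ × ℤ × ℤ), i.e. Laurent polynomials in three variables) defined by sending x to the monomial with exponent (0,0,1), y to the monomial with exponent (0,1,1), z to the monomial with exponent (1,0,a), and w to the monomial with exponent (−1,a,a), each with coefficient 1. Then the kernel of φ is the principal ideal generated by z·w − x^a·y^a. -/
/-!
The map sends a monomial `X^d` to the single Laurent monomial whose exponent is the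
`ℕ`-linear combination `E d` of the four weights, so its kernel is spanned by the binomials
`X^d - X^d'` with `E d = E d'`. Modulo `zw - xᵃyᵃ` every monomial is congruent to one in which
`z` or `w` does not occur (trade `(zw)^m` for `(xᵃyᵃ)^m`, `m = min(deg_z, deg_w)`), and `E` is
injective on such exponents. So reducing a kernel element to this normal form gives a polynomial
whose monomials have pairwise distinct images, which must vanish.
-/

open MvPolynomial

section MonomialMap

variable {σ R M : Type*} [CommRing R] [AddCommMonoid M]

theorem aeval_single_one_apply (v : σ → M) (p : MvPolynomial σ R) :
    aeval (fun i => AddMonoidAlgebra.single (v i) (1 : R)) p =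
      AddMonoidAlgebra.mapDomain (Finsupp.linearCombination ℕ v) p := by
  have : aeval (fun i => AddMonoidAlgebra.single (v i) (1 : R)) =
      AddMonoidAlgebra.mapDomainAlgHom R R (Finsupp.linearCombination ℕ v).toAddMonoidHom := by
    refine MvPolynomial.algHom_ext fun i => ?_
    rw [aeval_X, AddMonoidAlgebra.mapDomainAlgHom_apply, X, monomial]
    simp
  rw [this, AddMonoidAlgebra.mapDomainAlgHom_apply]
  rfl

theorem aeval_single_one_monomial (v : σ → M) (d : σ →₀ ℕ) (c : R) :
    aeval (fun i => AddMonoidAlgebra.single (v i) (1 : R)) (monomial d c) =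
      AddMonoidAlgebra.single (Finsupp.linearCombination ℕ v d) c := by
  rw [aeval_single_one_apply]
  exact AddMonoidAlgebra.mapDomain_single

theorem eq_zero_of_aeval_single_one_eq_zero (v : σ → M) {S : Set (σ →₀ ℕ)}
    (hS : Set.InjOn (Finsupp.linearCombination ℕ v) S) {p : MvPolynomial σ R}
    (hp : ↑p.support ⊆ S) (h : aeval (fun i => AddMonoidAlgebra.single (v i) (1 : R)) p = 0) :
    p = 0 := by
  rw [aeval_single_one_apply] at h
  have h' := congrArg AddMonoidAlgebra.coeff h
  rw [AddMonoidAlgebra.coeff_mapDomain, AddMonoidAlgebra.coeff_zero] at h'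
  refine AddMonoidAlgebra.coeff_injective (Finsupp.mapDomain_injOn S hS hp (by simp) ?_)
  simpa using h'

theorem monomial_sub_monomial_mem_span (u w d : σ →₀ ℕ) (m : ℕ) :
    monomial (m • u + d) (1 : R) - monomial (m • w + d) 1 ∈
      Ideal.span {monomial u (1 : R) - monomial w 1} := by
  rw [Ideal.mem_span_singleton]
  have : monomial (m • u + d) (1 : R) - monomial (m • w + d) 1 =
      monomial d 1 * (monomial u 1 ^ m - monomial w 1 ^ m) := by
    simp only [monomial_pow, monomial_mul, one_pow, mul_one, mul_sub, add_comm d]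
  rw [this]
  exact (sub_dvd_pow_sub_pow _ _ m).mul_left _

theorem ker_aeval_single_one_eq (v : σ → M) {I : Ideal (MvPolynomial σ R)}
    (hI : I ≤ RingHom.ker (aeval fun i => AddMonoidAlgebra.single (v i) (1 : R)))
    (nf : (σ →₀ ℕ) → σ →₀ ℕ) (hnf : ∀ d, monomial d (1 : R) - monomial (nf d) 1 ∈ I)
    (hinj : Set.InjOn (Finsupp.linearCombination ℕ v) (Set.range nf)) :
    RingHom.ker (aeval fun i => AddMonoidAlgebra.single (v i) (1 : R)) = I := by
  classical
  refine le_antisymm (fun p hp => ?_) hI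
  set q : MvPolynomial σ R := ∑ d ∈ p.support, monomial (nf d) (coeff d p)
  have hpq : p - q ∈ I := by
    rw [show p - q = ∑ d ∈ p.support, C (coeff d p) * (monomial d 1 - monomial (nf d) 1) by
      simp only [mul_sub, C_mul_monomial, mul_one, Finset.sum_sub_distrib, q, ← as_sum p]]
    exact Ideal.sum_mem _ fun d _ => I.mul_mem_left _ (hnf d)
  have hq : q = 0 := by
    refine eq_zero_of_aeval_single_one_eq_zero v hinj ?_ ?_
    · intro e he
      obtain ⟨d, -, hd⟩ := Finset.mem_biUnion.1 (support_sum he)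
      exact ⟨d, (Finset.mem_singleton.1 (support_monomial_subset hd)).symm⟩
    · simpa using sub_mem hp (hI hpq)
  simpa [hq] using hpq

end MonomialMap

namespace ToricDelPezzo

noncomputable section

variable {R : Type*} [CommRing R] (a : ℕ)

def weight : Fin 4 → ℤ × ℤ × ℤ := ![(0, 0, 1), (0, 1, 1), (1, 0, a), (-1, a, a)]

theorem linearCombination_weight (d : Fin 4 →₀ ℕ) :
    Finsupp.linearCombination ℕ (weight a) d =
      ((d 2 : ℤ) - d 3, (d 1 : ℤ) + a * d 3, (d 0 : ℤ) + d 1 + a * d 2 + a * d 3) := by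
  rw [Finsupp.linearCombination_apply, Finsupp.sum_fintype _ _ (by simp), Fin.sum_univ_four]
  simp only [weight, Matrix.cons_val_zero, Matrix.cons_val_one, Matrix.cons_val_two,
    Matrix.cons_val_three, Matrix.head_cons, Matrix.tail_cons, Prod.smul_mk, Prod.mk_add_mk,
    nsmul_eq_mul, Prod.mk.injEq]
  refine ⟨by ring, by ring, by ring⟩

theorem injOn_linearCombination_weight :
    Set.InjOn (Finsupp.linearCombination ℕ (weight a)) {d | d 2 = 0 ∨ d 3 = 0} := by
  intro d hd d' hd' h
  simp only [linearCombination_weight, Prod.mk.injEq] at h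
  obtain ⟨h₁, h₂, h₃⟩ := h
  have e2 : d 2 = d' 2 := by simp only [Set.mem_ofPred_eq] at hd hd'; omega
  have e3 : d 3 = d' 3 := by simp only [Set.mem_ofPred_eq] at hd hd'; omega
  rw [e3] at h₂
  rw [e2, e3] at h₃
  have e1 : d 1 = d' 1 := by omega
  have e0 : d 0 = d' 0 := by omega
  ext i
  fin_cases i <;> assumption

def zw : Fin 4 →₀ ℕ := Finsupp.single 2 1 + Finsupp.single 3 1

def xyPow : Fin 4 →₀ ℕ := Finsupp.single 0 a + Finsupp.single 1 a

theorem monomial_zw : monomial zw (1 : R) = X 2 * X 3 := by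
  rw [zw, ← mul_one (1 : R), ← monomial_mul, X, X]

theorem monomial_xyPow : monomial (xyPow a) (1 : R) = X 0 ^ a * X 1 ^ a := by
  rw [xyPow, ← mul_one (1 : R), ← monomial_mul, X_pow_eq_monomial, X_pow_eq_monomial]

def normalForm (d : Fin 4 →₀ ℕ) : Fin 4 →₀ ℕ :=
  min (d 2) (d 3) • xyPow a + (d - min (d 2) (d 3) • zw)

theorem normalForm_two_eq_zero_or_three_eq_zero (d : Fin 4 →₀ ℕ) :
    normalForm a d 2 = 0 ∨ normalForm a d 3 = 0 := by
  simp only [normalForm, xyPow, zw, smul_add, Finsupp.smul_single, smul_eq_mul, mul_one,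
    Finsupp.coe_add, Finsupp.coe_tsub, Pi.add_apply, Pi.sub_apply, ne_eq, Fin.reduceEq,
    not_false_eq_true, Finsupp.single_eq_of_ne, Finsupp.single_eq_same, add_zero,
    zero_add]
  omega

theorem min_smul_zw_le (d : Fin 4 →₀ ℕ) : min (d 2) (d 3) • zw ≤ d := by
  intro i
  fin_cases i <;> simp [zw]

theorem monomial_sub_monomial_normalForm_mem_span (d : Fin 4 →₀ ℕ) :
    monomial d (1 : R) - monomial (normalForm a d) 1 ∈
      Ideal.span {(X 2 * X 3 - X 0 ^ a * X 1 ^ a : MvPolynomial (Fin 4) R)} := by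
  have := monomial_sub_monomial_mem_span (R := R) zw (xyPow a) (d - min (d 2) (d 3) • zw)
    (min (d 2) (d 3))
  rwa [add_tsub_cancel_of_le (min_smul_zw_le d), monomial_zw, monomial_xyPow] at this

theorem aeval_weight_zw_sub_xyPow :
    aeval (fun i => AddMonoidAlgebra.single (weight a i) (1 : R))
      (X 2 * X 3 - X 0 ^ a * X 1 ^ a : MvPolynomial (Fin 4) R) = 0 := by
  have : Finsupp.linearCombination ℕ (weight a) zw =
      Finsupp.linearCombination ℕ (weight a) (xyPow a) := by
    simp [linearCombination_weight, zw, xyPow]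
  rw [← monomial_zw, ← monomial_xyPow, map_sub, aeval_single_one_monomial,
    aeval_single_one_monomial, this, sub_self]

theorem ker_aeval_weight :
    RingHom.ker (aeval fun i => AddMonoidAlgebra.single (weight a i) (1 : R)) =
      Ideal.span {(X 2 * X 3 - X 0 ^ a * X 1 ^ a : MvPolynomial (Fin 4) R)} :=
  ker_aeval_single_one_eq _ ((Ideal.span_singleton_le_iff_mem _).2 (aeval_weight_zw_sub_xyPow a))
    (normalForm a) (monomial_sub_monomial_normalForm_mem_span a)
    ((injOn_linearCombination_weight a).mono
      (Set.range_subset_iff.2 (normalForm_two_eq_zero_or_three_eq_zero a)))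

end

end ToricDelPezzo

theorem stmt_3_general (a : ℕ) :
    RingHom.ker
      (MvPolynomial.aeval
        (![AddMonoidAlgebra.single ((0 : ℤ), (0 : ℤ), (1 : ℤ)) (1 : ℂ),
           AddMonoidAlgebra.single ((0 : ℤ), (1 : ℤ), (1 : ℤ)) (1 : ℂ),
           AddMonoidAlgebra.single ((1 : ℤ), (0 : ℤ), (a : ℤ)) (1 : ℂ),
           AddMonoidAlgebra.single ((-1 : ℤ), (a : ℤ), (a : ℤ)) (1 : ℂ)] :
          Fin 4 → AddMonoidAlgebra ℂ (ℤ × ℤ × ℤ)) :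
        MvPolynomial (Fin 4) ℂ →ₐ[ℂ] AddMonoidAlgebra ℂ (ℤ × ℤ × ℤ))
    = Ideal.span {(X 2 * X 3 - X 0 ^ a * X 1 ^ a : MvPolynomial (Fin 4) ℂ)} := by
  refine (congrArg (fun v => RingHom.ker (aeval (R := ℂ) v)) ?_).trans
    (ToricDelPezzo.ker_aeval_weight a)
  funext i
  fin_cases i <;> rfl

/-- For an integer `a ≥ 2`, the kernel of the ℂ-algebra map
`ℂ[x,y,z,w] → ℂ[ℤ³]` sending `x, y, z, w` to the Laurent monomials with exponents
`(0,0,1)`, `(0,1,1)`, `(1,0,a)`, `(-1,a,a)` is the principal ideal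
generated by `z·w − xᵃ·yᵃ`. -/
theorem stmt_3 (a : ℕ) (ha : 2 ≤ a) :
    RingHom.ker
      (MvPolynomial.aeval
        (![AddMonoidAlgebra.single ((0 : ℤ), (0 : ℤ), (1 : ℤ)) (1 : ℂ),
           AddMonoidAlgebra.single ((0 : ℤ), (1 : ℤ), (1 : ℤ)) (1 : ℂ),
           AddMonoidAlgebra.single ((1 : ℤ), (0 : ℤ), (a : ℤ)) (1 : ℂ),
           AddMonoidAlgebra.single ((-1 : ℤ), (a : ℤ), (a : ℤ)) (1 : ℂ)] :
          Fin 4 → AddMonoidAlgebra ℂ (ℤ × ℤ × ℤ)) :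
        MvPolynomial (Fin 4) ℂ →ₐ[ℂ] AddMonoidAlgebra ℂ (ℤ × ℤ × ℤ))
    = Ideal.span {(X 2 * X 3 - X 0 ^ a * X 1 ^ a : MvPolynomial (Fin 4) ℂ)} :=
  stmt_3_general a
end
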